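/- arXiv:0904.0782 — 2 statements merged into one kernel-verified Lean document; each statement's English description precedes it below -/
import Mathlib

section
/- Let λ = (λ_1,…,λ_n) be a partition with λ_i > 0, let T be a standard λ-tableau whose first column has height i (i.e., the number of nonzero parts of λ relevant to the first column is i), let i_0 be the minimal element of {1,…,i} with i_0 < T(i_0, 1) (and i_0 := +∞ if there is no such element), and let Γ be the graph with vertex set ℤ whose edges are (s, T(s,1)) for s = i_0,…,i. Then Γ is a flow, all of whose sources and transit points are at most i and all of whose sinks are greater than i; and if a_1 < … < a_q are its sources and b_q < … < b_1 its sinks, then Γ is the smallest element of 𝓕_i(a_1,…,a_q; b_1,…,b_q) with respect to the linear order on flows. -/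
open Finset

/-- A "flow graph" is a finite set of directed edges with integer vertices. -/
abbrev FlowGraph : Type := Finset (ℤ × ℤ)

/-- The edges of `E` beginning at `r`. -/
def beginsAt (E : FlowGraph) (r : ℤ) : Finset (ℤ × ℤ) := E.filter (fun e => e.1 = r)

/-- The edges of `E` ending at `r`. -/
def endsAt (E : FlowGraph) (r : ℤ) : Finset (ℤ × ℤ) := E.filter (fun e => e.2 = r)

/-- `E` is a flow with set of sources `A` and set of sinks `B`:
every edge `(s,t)` has `s < t`; the sources and sinks are pairwise distinct;
exactly one edge begins at each source (and none ends there); exactly one edge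
ends at each sink (and none begins there); and every other vertex either meets
no edge, or exactly one edge ends at it and exactly one edge begins at it
(such a vertex is a transit point). -/
structure IsFlow (E : FlowGraph) (A B : Finset ℤ) : Prop where
  edge_lt : ∀ e ∈ E, e.1 < e.2
  disjAB : Disjoint A B
  source_out : ∀ a ∈ A, (beginsAt E a).card = 1
  source_in : ∀ a ∈ A, endsAt E a = ∅
  sink_in : ∀ b ∈ B, (endsAt E b).card = 1
  sink_out : ∀ b ∈ B, beginsAt E b = ∅
  transit : ∀ r : ℤ, r ∉ A → r ∉ B →
      (beginsAt E r = ∅ ∧ endsAt E r = ∅) ∨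
      ((beginsAt E r).card = 1 ∧ (endsAt E r).card = 1)

/-- The set of transit points of the flow `E` with sources `A` and sinks `B`:
the vertices meeting some edge which are neither sources nor sinks. -/
def transitSet (E : FlowGraph) (A B : Finset ℤ) : Finset ℤ :=
  ((E.image Prod.fst) ∪ (E.image Prod.snd)) \ (A ∪ B)

def IsTransitPoint (E : FlowGraph) (A B : Finset ℤ) (r : ℤ) : Prop :=
  r ∈ transitSet E A B

/-- Two vertices are linked if they lie in the same connected component of `E`. -/
def Linked (E : FlowGraph) (x y : ℤ) : Prop :=
  Relation.ReflTransGen (fun u v => (u, v) ∈ E ∨ (v, u) ∈ E) x y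

/-- The finset of values of a family of integers. -/
def srcSet {q : ℕ} (a : Fin q → ℤ) : Finset ℤ := Finset.image a Finset.univ

/-- Membership in `𝓕_i(a_1,…,a_q; b_1,…,b_q)` : a flow with sources the `a j`,
sinks the `b j`, and no transit point greater than `i`. -/
def InF {q : ℕ} (i : ℤ) (a b : Fin q → ℤ) (E : FlowGraph) : Prop :=
  IsFlow E (srcSet a) (srcSet b) ∧
  ∀ r : ℤ, IsTransitPoint E (srcSet a) (srcSet b) r → r ≤ i

/-- A list of edges ordered so that the ends are strictly decreasing. -/
def DescList (l : List (ℤ × ℤ)) : Prop := l.Pairwise (fun e f => f.2 < e.2)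

/-- The order on flows: `Γ < Γ'` iff, enumerating the edges of `Γ` and `Γ'` with
strictly decreasing ends, at the first index where the enumerations differ the
edge of `Γ` has a strictly larger beginning than the edge of `Γ'`. -/
def FlowLt (E E' : FlowGraph) : Prop :=
  ∃ (u v v' : List (ℤ × ℤ)) (e e' : ℤ × ℤ),
    DescList (u ++ e :: v) ∧ DescList (u ++ e' :: v') ∧
    (u ++ e :: v).toFinset = E ∧ (u ++ e' :: v').toFinset = E' ∧
    e'.1 < e.1

/-- `lam` is a composition of length `n`: it vanishes outside `{1,…,n}`. -/
def IsComposition (n : ℤ) (lam : ℤ → ℕ) : Prop :=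
  ∀ r : ℤ, r < 1 ∨ n < r → lam r = 0

/-- A row standard `lam`-tableau with entries in `{1,…,n}` is modelled by its
rows, each row being the multiset of its entries. -/
def IsTab (n : ℤ) (lam : ℤ → ℕ) (T : ℤ → Multiset ℤ) : Prop :=
  (∀ r : ℤ, (T r).card = lam r) ∧
  (∀ r : ℤ, ∀ x ∈ T r, 1 ≤ x ∧ x ≤ n)

/-- Row `r` of the tableau, sorted weakly increasingly. -/
def rowList (T : ℤ → Multiset ℤ) (r : ℤ) : List ℤ :=
  Multiset.sort (T r) (· ≤ ·)

/-- The tableau is standard: the entries strictly increase down the columns. -/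
def IsStandardTab (T : ℤ → Multiset ℤ) : Prop :=
  ∀ r : ℤ, 1 ≤ r → ∀ j : ℕ, j < (rowList T (r + 1)).length →
    j < (rowList T r).length ∧ (rowList T r).getD j 0 < (rowList T (r + 1)).getD j 0

/-- `T(r, 1)`, the first (smallest) entry of row `r`. -/
def firstCol (T : ℤ → Multiset ℤ) (r : ℤ) : ℤ := (rowList T r).headI

/-!
Standardness makes `f s = T(s,1)` strictly increasing on `[1, i]`, and `i₀ < f i₀` propagates
to `s < f s` on `[i₀, i]`. So `Γ` is the graph of `f` on `[i₀, i]`, a flow with sources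
`[i₀, i] \ f[i₀, i]` and sinks `f[i₀, i] \ [i₀, i]`. Every competing flow `Γ'` with these sources
and sinks and transit points `≤ i` has all its edges beginning in `[i₀, i]` (its lowest vertex is
a source) and ending in `f[i₀, i]`. If `k` is the largest `s` with `(s, f s) ∉ Γ'`, then `Γ` and
`Γ'` share the edges ending above `f k`, while the edge of `Γ'` ending at `f k` begins below `k`:
this is the first difference of the two enumerations, so `Γ < Γ'`.
-/

namespace IsFlow

variable {E : FlowGraph} {A B : Finset ℤ} {e : ℤ × ℤ} {r : ℤ}

lemma card_beginsAt_le_one (hF : IsFlow E A B) (r : ℤ) : (beginsAt E r).card ≤ 1 := by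
  by_cases hB : r ∈ B
  · simp [hF.sink_out r hB]
  by_cases hA : r ∈ A
  · exact (hF.source_out r hA).le
  rcases hF.transit r hA hB with ⟨h, -⟩ | ⟨h, -⟩ <;> simp [h]

lemma card_endsAt_le_one (hF : IsFlow E A B) (r : ℤ) : (endsAt E r).card ≤ 1 := by
  by_cases hA : r ∈ A
  · simp [hF.source_in r hA]
  by_cases hB : r ∈ B
  · exact (hF.sink_in r hB).le
  rcases hF.transit r hA hB with ⟨-, h⟩ | ⟨-, h⟩ <;> simp [h]

lemma injOn_fst (hF : IsFlow E A B) : Set.InjOn Prod.fst (E : Set (ℤ × ℤ)) :=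
  fun e he g hg h => Finset.card_le_one.mp (hF.card_beginsAt_le_one e.1) e
    (mem_filter.mpr ⟨he, rfl⟩) g (mem_filter.mpr ⟨hg, h.symm⟩)

lemma injOn_snd (hF : IsFlow E A B) : Set.InjOn Prod.snd (E : Set (ℤ × ℤ)) :=
  fun e he g hg h => Finset.card_le_one.mp (hF.card_endsAt_le_one e.2) e
    (mem_filter.mpr ⟨he, rfl⟩) g (mem_filter.mpr ⟨hg, h.symm⟩)

lemma fst_mem_or_isTransitPoint (hF : IsFlow E A B) (he : e ∈ E) :
    e.1 ∈ A ∨ IsTransitPoint E A B e.1 := by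
  by_cases hA : e.1 ∈ A
  · exact .inl hA
  have hB : e.1 ∉ B := fun hB => by
    have h : e ∈ beginsAt E e.1 := mem_filter.mpr ⟨he, rfl⟩
    simp [hF.sink_out _ hB] at h
  exact .inr (mem_sdiff.mpr ⟨mem_union_left _ (mem_image_of_mem _ he), by simp [hA, hB]⟩)

lemma snd_mem_or_isTransitPoint (hF : IsFlow E A B) (he : e ∈ E) :
    e.2 ∈ B ∨ IsTransitPoint E A B e.2 := by
  by_cases hB : e.2 ∈ B
  · exact .inl hB
  have hA : e.2 ∉ A := fun hA => by
    have h : e ∈ endsAt E e.2 := mem_filter.mpr ⟨he, rfl⟩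
    simp [hF.source_in _ hA] at h
  exact .inr (mem_sdiff.mpr ⟨mem_union_right _ (mem_image_of_mem _ he), by simp [hA, hB]⟩)

lemma exists_snd_eq_of_mem_sinks (hF : IsFlow E A B) (hr : r ∈ B) : ∃ g ∈ E, g.2 = r := by
  obtain ⟨g, hg⟩ := card_pos.mp (hF.sink_in r hr).ge
  exact ⟨g, (mem_filter.mp hg).1, (mem_filter.mp hg).2⟩

lemma exists_snd_eq_of_fst_eq (hF : IsFlow E A B) (he : e ∈ E) (hA : e.1 ∉ A) :
    ∃ g ∈ E, g.2 = e.1 := by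
  have hbegin : e ∈ beginsAt E e.1 := mem_filter.mpr ⟨he, rfl⟩
  have hB : e.1 ∉ B := fun hB => by simp [hF.sink_out _ hB] at hbegin
  rcases hF.transit e.1 hA hB with ⟨h, -⟩ | ⟨-, h⟩
  · simp [h] at hbegin
  · obtain ⟨g, hg⟩ := card_pos.mp h.ge
    exact ⟨g, (mem_filter.mp hg).1, (mem_filter.mp hg).2⟩

/-- The edge with the smallest beginning has no incoming edge, so it starts at a source. -/
lemma exists_source_le_fst (hF : IsFlow E A B) (he : e ∈ E) : ∃ a ∈ A, a ≤ e.1 := by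
  obtain ⟨m, hm, hmin⟩ := exists_min_image E Prod.fst ⟨e, he⟩
  refine ⟨m.1, ?_, hmin e he⟩
  by_contra hA
  obtain ⟨g, hg, hgm⟩ := hF.exists_snd_eq_of_fst_eq hm hA
  have := hF.edge_lt g hg
  have := hmin g hg
  omega

end IsFlow

lemma exists_descList {E : Finset (ℤ × ℤ)} (hE : Set.InjOn Prod.snd (E : Set (ℤ × ℤ))) :
    ∃ l, DescList l ∧ l.toFinset = E := by
  revert hE
  refine Finset.induction_on_max_value Prod.snd E (fun _ => ⟨[], .nil, rfl⟩) ?_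
  intro e E heE hmax ih hE
  obtain ⟨l, hl, rfl⟩ := ih (hE.mono (by simp))
  refine ⟨e :: l, List.pairwise_cons.mpr ⟨fun g hg => ?_, hl⟩, List.toFinset_cons⟩
  refine (hmax g (List.mem_toFinset.mpr hg)).lt_of_ne fun h => ?_
  have : g = e := hE (by simp [hg]) (by simp) h
  exact heE (List.mem_toFinset.mpr (this ▸ hg))

lemma exists_descList_append_cons {E : Finset (ℤ × ℤ)}
    (hE : Set.InjOn Prod.snd (E : Set (ℤ × ℤ))) {e : ℤ × ℤ} (he : e ∈ E) {u : List (ℤ × ℤ)}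
    (hu : DescList u) (huE : u.toFinset = E.filter (fun g => e.2 < g.2)) :
    ∃ v, DescList (u ++ e :: v) ∧ (u ++ e :: v).toFinset = E := by
  obtain ⟨v, hv, hvE⟩ := exists_descList (E := E.filter (fun g => g.2 < e.2))
    (hE.mono (coe_subset.mpr (filter_subset _ _)))
  have hmem_u : ∀ g ∈ u, e.2 < g.2 := fun g hg => by
    have := List.mem_toFinset.mpr hg
    rw [huE, mem_filter] at this
    exact this.2
  have hmem_v : ∀ g ∈ v, g.2 < e.2 := fun g hg => by
    have := List.mem_toFinset.mpr hg
    rw [hvE, mem_filter] at this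
    exact this.2
  refine ⟨v, List.pairwise_append.mpr ⟨hu, List.pairwise_cons.mpr ⟨hmem_v, hv⟩,
    fun g hg g' hg' => ?_⟩, ?_⟩
  · rcases List.mem_cons.mp hg' with rfl | hg'
    · exact hmem_u g hg
    · exact (hmem_v g' hg').trans (hmem_u g hg)
  · ext g
    simp only [List.toFinset_append, List.toFinset_cons, huE, hvE, mem_union, mem_insert,
      mem_filter]
    constructor
    · rintro (⟨hg, -⟩ | rfl | ⟨hg, -⟩) <;> assumption
    · intro hg
      rcases lt_trichotomy e.2 g.2 with h | h | h
      · exact .inl ⟨hg, h⟩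
      · exact .inr (.inl (hE hg he h.symm))
      · exact .inr (.inr ⟨hg, h⟩)

/-- The common edges ending above `e` and `e'` form the shared prefix in `FlowLt`. -/
lemma flowLt_of_filter_eq {E E' : FlowGraph} (hE : Set.InjOn Prod.snd (E : Set (ℤ × ℤ)))
    (hE' : Set.InjOn Prod.snd (E' : Set (ℤ × ℤ))) {e e' : ℤ × ℤ} (he : e ∈ E) (he' : e' ∈ E')
    (hfilter : E.filter (fun g => e.2 < g.2) = E'.filter (fun g => e'.2 < g.2))
    (hlt : e'.1 < e.1) : FlowLt E E' := by
  obtain ⟨u, hu, huE⟩ := exists_descList (E := E.filter (fun g => e.2 < g.2))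
    (hE.mono (coe_subset.mpr (filter_subset _ _)))
  obtain ⟨v, hv, hvE⟩ := exists_descList_append_cons hE he hu huE
  obtain ⟨v', hv', hvE'⟩ := exists_descList_append_cons hE' he' hu (huE.trans hfilter)
  exact ⟨u, v, v', e, e', hv, hv', hvE, hvE', hlt⟩

section GraphOn

variable {i0 i : ℤ} {f : ℤ → ℤ}

noncomputable def graphOn (i0 i : ℤ) (f : ℤ → ℤ) : FlowGraph := (Icc i0 i).image (fun s => (s, f s))

noncomputable def graphSources (i0 i : ℤ) (f : ℤ → ℤ) : Finset ℤ := Icc i0 i \ (Icc i0 i).image f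

noncomputable def graphSinks (i0 i : ℤ) (f : ℤ → ℤ) : Finset ℤ := (Icc i0 i).image f \ Icc i0 i

lemma mem_graphOn {e : ℤ × ℤ} : e ∈ graphOn i0 i f ↔ e.1 ∈ Icc i0 i ∧ f e.1 = e.2 := by
  constructor
  · intro h
    obtain ⟨s, hs, rfl⟩ := mem_image.mp h
    exact ⟨hs, rfl⟩
  · rintro ⟨hs, hfs⟩
    exact mem_image.mpr ⟨e.1, hs, by rw [hfs]⟩

lemma injOn_snd_graphOn (hf : Set.InjOn f (Set.Icc i0 i)) :
    Set.InjOn Prod.snd (graphOn i0 i f : Set (ℤ × ℤ)) := by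
  intro e he g hg h
  obtain ⟨he1, hfe⟩ := mem_graphOn.mp he
  obtain ⟨hg1, hfg⟩ := mem_graphOn.mp hg
  have h1 : e.1 = g.1 := hf (by simpa using he1) (by simpa using hg1) (by rw [hfe, hfg, h])
  exact Prod.ext h1 h

lemma beginsAt_graphOn_of_mem {r : ℤ} (hr : r ∈ Icc i0 i) :
    beginsAt (graphOn i0 i f) r = {(r, f r)} := by
  ext e
  simp only [beginsAt, mem_filter, mem_graphOn, mem_singleton]
  constructor
  · rintro ⟨⟨-, hfe⟩, rfl⟩
    exact Prod.ext rfl hfe.symm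
  · rintro rfl
    exact ⟨⟨hr, rfl⟩, rfl⟩

lemma beginsAt_graphOn_of_notMem {r : ℤ} (hr : r ∉ Icc i0 i) :
    beginsAt (graphOn i0 i f) r = ∅ := by
  ext e
  simp only [beginsAt, mem_filter, mem_graphOn, notMem_empty, iff_false]
  rintro ⟨⟨he, -⟩, rfl⟩
  exact hr he

lemma endsAt_graphOn_apply (hf : Set.InjOn f (Set.Icc i0 i)) {s : ℤ} (hs : s ∈ Icc i0 i) :
    endsAt (graphOn i0 i f) (f s) = {(s, f s)} := by
  ext e
  simp only [endsAt, mem_filter, mem_graphOn, mem_singleton]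
  constructor
  · rintro ⟨⟨he, hfe⟩, hes⟩
    exact Prod.ext (hf (by simpa using he) (by simpa using hs) (hfe.trans hes)) hes
  · rintro rfl
    exact ⟨⟨hs, rfl⟩, rfl⟩

lemma endsAt_graphOn_of_notMem_image {r : ℤ} (hr : r ∉ (Icc i0 i).image f) :
    endsAt (graphOn i0 i f) r = ∅ := by
  ext e
  simp only [endsAt, mem_filter, mem_graphOn, notMem_empty, iff_false]
  rintro ⟨⟨he, hfe⟩, rfl⟩
  exact hr (mem_image.mpr ⟨e.1, he, hfe⟩)

lemma isFlow_graphOn (hlt : ∀ s ∈ Icc i0 i, s < f s) (hf : Set.InjOn f (Set.Icc i0 i)) :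
    IsFlow (graphOn i0 i f) (graphSources i0 i f) (graphSinks i0 i f) where
  edge_lt e he := by
    obtain ⟨he1, hfe⟩ := mem_graphOn.mp he
    exact hfe ▸ hlt e.1 he1
  disjAB := disjoint_sdiff_sdiff
  source_out a ha := by rw [beginsAt_graphOn_of_mem (mem_sdiff.mp ha).1, card_singleton]
  source_in a ha := endsAt_graphOn_of_notMem_image (mem_sdiff.mp ha).2
  sink_in b hb := by
    obtain ⟨s, hs, rfl⟩ := mem_image.mp (mem_sdiff.mp hb).1
    rw [endsAt_graphOn_apply hf hs, card_singleton]
  sink_out b hb := beginsAt_graphOn_of_notMem (mem_sdiff.mp hb).2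
  transit r hA hB := by
    by_cases hr : r ∈ Icc i0 i
    · have himage : r ∈ (Icc i0 i).image f := by
        by_contra h
        exact hA (mem_sdiff.mpr ⟨hr, h⟩)
      obtain ⟨s, hs, rfl⟩ := mem_image.mp himage
      right
      rw [beginsAt_graphOn_of_mem hr, endsAt_graphOn_apply hf hs]
      exact ⟨card_singleton _, card_singleton _⟩
    · left
      refine ⟨beginsAt_graphOn_of_notMem hr, endsAt_graphOn_of_notMem_image fun h => ?_⟩
      exact hB (mem_sdiff.mpr ⟨h, hr⟩)

lemma le_of_mem_graphSources {a : ℤ} (ha : a ∈ graphSources i0 i f) : a ≤ i :=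
  (mem_Icc.mp (mem_sdiff.mp ha).1).2

lemma lt_of_mem_graphSinks (hlt : ∀ s ∈ Icc i0 i, s < f s) {b : ℤ}
    (hb : b ∈ graphSinks i0 i f) : i < b := by
  obtain ⟨hb, hbI⟩ := mem_sdiff.mp hb
  obtain ⟨s, hs, rfl⟩ := mem_image.mp hb
  have := hlt s hs
  simp only [mem_Icc] at hs hbI
  omega

lemma le_of_isTransitPoint_graphOn {r : ℤ}
    (hr : IsTransitPoint (graphOn i0 i f) (graphSources i0 i f) (graphSinks i0 i f) r) :
    r ≤ i := by
  obtain ⟨hr, hAB⟩ := mem_sdiff.mp hr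
  simp only [mem_union, mem_image] at hr
  rcases hr with ⟨e, he, rfl⟩ | ⟨e, he, rfl⟩
  · exact (mem_Icc.mp (mem_graphOn.mp he).1).2
  · obtain ⟨he1, hfe⟩ := mem_graphOn.mp he
    by_contra h
    refine hAB (mem_union_right _ (mem_sdiff.mpr ⟨mem_image.mpr ⟨e.1, he1, hfe⟩, ?_⟩))
    simp only [mem_Icc]
    omega

lemma exists_snd_eq_apply_of_isFlow {E' : FlowGraph}
    (hF' : IsFlow E' (graphSources i0 i f) (graphSinks i0 i f)) (hlt : ∀ s ∈ Icc i0 i, s < f s)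
    {k : ℤ} (hk : k ∈ Icc i0 i) (habove : ∀ s ∈ Icc i0 i, k < s → (s, f s) ∈ E') :
    ∃ e' ∈ E', e'.2 = f k := by
  by_cases hfk : f k ∈ Icc i0 i
  · have hfkA : f k ∉ graphSources i0 i f := fun hA => (mem_sdiff.mp hA).2 (mem_image_of_mem f hk)
    exact hF'.exists_snd_eq_of_fst_eq (habove (f k) hfk (hlt k hk)) hfkA
  · exact hF'.exists_snd_eq_of_mem_sinks (mem_sdiff.mpr ⟨mem_image_of_mem f hk, hfk⟩)

section Competitor

variable {E' : FlowGraph}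
  (hF' : IsFlow E' (graphSources i0 i f) (graphSinks i0 i f))
  (htr' : ∀ r, IsTransitPoint E' (graphSources i0 i f) (graphSinks i0 i f) r → r ≤ i)
include hF' htr'

lemma fst_mem_Icc_of_isFlow {e : ℤ × ℤ} (he : e ∈ E') : e.1 ∈ Icc i0 i := by
  obtain ⟨a, ha, hae⟩ := hF'.exists_source_le_fst he
  have ha := mem_Icc.mp (mem_sdiff.mp ha).1
  rcases hF'.fst_mem_or_isTransitPoint he with hA | htr
  · exact (mem_sdiff.mp hA).1
  · exact mem_Icc.mpr ⟨by omega, htr' _ htr⟩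

lemma snd_mem_image_of_isFlow {e : ℤ × ℤ} (he : e ∈ E') : e.2 ∈ (Icc i0 i).image f := by
  rcases hF'.snd_mem_or_isTransitPoint he with hB | htr
  · exact (mem_sdiff.mp hB).1
  · by_contra himage
    have hA : e.2 ∉ graphSources i0 i f := (mem_sdiff.mp htr).2 ∘ mem_union_left _
    have h1 := mem_Icc.mp (fst_mem_Icc_of_isFlow hF' htr' he)
    have h2 := hF'.edge_lt e he
    exact hA (mem_sdiff.mpr ⟨mem_Icc.mpr ⟨by omega, htr' _ htr⟩, himage⟩)

lemma eq_graphOn_of_subset (hsub : graphOn i0 i f ⊆ E') : E' = graphOn i0 i f := by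
  refine Subset.antisymm (fun g hg => ?_) hsub
  have hgG : (g.1, f g.1) ∈ graphOn i0 i f :=
    mem_graphOn.mpr ⟨fst_mem_Icc_of_isFlow hF' htr' (e := g) hg, rfl⟩
  rwa [hF'.injOn_fst hg (hsub hgG) rfl]

lemma filter_graphOn_eq_filter (hf : StrictMonoOn f (Set.Icc i0 i)) {k : ℤ}
    (hk : k ∈ Icc i0 i) (habove : ∀ s ∈ Icc i0 i, k < s → (s, f s) ∈ E') :
    (graphOn i0 i f).filter (fun g => f k < g.2) = E'.filter (fun g => f k < g.2) := by
  have hkI : k ∈ Set.Icc i0 i := by simpa using hk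
  ext g
  simp only [mem_filter, and_congr_left_iff]
  intro hg2
  constructor
  · intro hg
    obtain ⟨hg1, hfg⟩ := mem_graphOn.mp hg
    have hkg : k < g.1 := (hf.lt_iff_lt hkI (by simpa using hg1)).mp (hfg ▸ hg2)
    rw [show g = (g.1, f g.1) from Prod.ext rfl hfg.symm]
    exact habove g.1 hg1 hkg
  · intro hg
    obtain ⟨s, hs, hfs⟩ := mem_image.mp (snd_mem_image_of_isFlow hF' htr' hg)
    have hks : k < s := (hf.lt_iff_lt hkI (by simpa using hs)).mp (hfs ▸ hg2)
    rw [← hF'.injOn_snd (habove s hs hks) hg hfs]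
    exact mem_graphOn.mpr ⟨hs, rfl⟩

lemma flowLt_graphOn (hlt : ∀ s ∈ Icc i0 i, s < f s) (hf : StrictMonoOn f (Set.Icc i0 i))
    (hne : E' ≠ graphOn i0 i f) : FlowLt (graphOn i0 i f) E' := by
  have hmissing : ((Icc i0 i).filter fun s => (s, f s) ∉ E').Nonempty := by
    obtain ⟨g, hg, hgE'⟩ := not_subset.mp (mt (eq_graphOn_of_subset hF' htr') hne)
    obtain ⟨hg1, hfg⟩ := mem_graphOn.mp hg
    exact ⟨g.1, mem_filter.mpr ⟨hg1, by rwa [hfg]⟩⟩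
  obtain ⟨k, hkK, hkmax⟩ := exists_max_image _ id hmissing
  obtain ⟨hk, hkE'⟩ := mem_filter.mp hkK
  have habove : ∀ s ∈ Icc i0 i, k < s → (s, f s) ∈ E' := fun s hs hks => by
    by_contra h
    exact (hkmax s (mem_filter.mpr ⟨hs, h⟩)).not_gt hks
  obtain ⟨e', he', he'2⟩ := exists_snd_eq_apply_of_isFlow hF' hlt hk habove
  have he'1 : e'.1 < k := by
    have hs' := fst_mem_Icc_of_isFlow hF' htr' he'
    rcases lt_trichotomy e'.1 k with h | rfl | h
    · exact h
    · exact absurd (he'2 ▸ he') hkE'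
    · have he'eq := hF'.injOn_fst he' (habove _ hs' h) rfl
      have := hf.injOn (by simpa using hk) (by simpa using hs')
        (he'2.symm.trans (congrArg Prod.snd he'eq))
      omega
  refine flowLt_of_filter_eq (injOn_snd_graphOn hf.injOn) hF'.injOn_snd
    (e := (k, f k)) (mem_graphOn.mpr ⟨hk, rfl⟩) he' ?_ he'1
  rw [he'2]
  exact filter_graphOn_eq_filter hF' htr' hf hk habove

end Competitor

end GraphOn

lemma lt_apply_of_strictMonoOn {f : ℤ → ℤ} {a b : ℤ} (hf : StrictMonoOn f (Set.Icc a b))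
    (ha : a < f a) : ∀ s ∈ Icc a b, s < f s := by
  intro s hs
  obtain ⟨has, hsb⟩ := mem_Icc.mp hs
  induction s, has using Int.leInduction with
  | base => exact ha
  | succ s has ih =>
    have hstep : f s < f (s + 1) :=
      hf ⟨has, by omega⟩ ⟨by omega, hsb⟩ (lt_add_one s)
    have := ih (mem_Icc.mpr ⟨has, by omega⟩) (by omega)
    omega

lemma firstCol_lt_firstCol_add_one {T : ℤ → Multiset ℤ} (hstd : IsStandardTab T) {s : ℤ}
    (hs : 1 ≤ s) (hne : T (s + 1) ≠ 0) : firstCol T s < firstCol T (s + 1) := by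
  have hlen : 0 < (rowList T (s + 1)).length := by
    rw [rowList, Multiset.length_sort]
    exact Multiset.card_pos.mpr hne
  have headI_eq_getD : ∀ l : List ℤ, l.headI = l.getD 0 0 := fun l => by cases l <;> rfl
  rw [firstCol, firstCol, headI_eq_getD, headI_eq_getD]
  exact (hstd s hs 0 hlen).2

theorem statement18_general (n i : ℤ) (lam : ℤ → ℕ) (T : ℤ → Multiset ℤ)
    (hheight : ∀ j : ℤ, 1 ≤ j → (0 < lam j ↔ j ≤ i))
    (hT : IsTab n lam T) (hstd : IsStandardTab T)
    (i0 : ℤ)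
    (hi0 : (1 ≤ i0 ∧ i0 ≤ i ∧ i0 < firstCol T i0 ∧
              ∀ s : ℤ, 1 ≤ s → s < i0 → ¬ s < firstCol T s)
         ∨ (i0 = i + 1 ∧ ∀ s : ℤ, 1 ≤ s → s ≤ i → ¬ s < firstCol T s)) :
    ∃ A B : Finset ℤ,
      IsFlow ((Finset.Icc i0 i).image (fun s => (s, firstCol T s))) A B ∧
      (∀ x ∈ A, x ≤ i) ∧ (∀ y ∈ B, i < y) ∧
      (∀ r : ℤ, IsTransitPoint ((Finset.Icc i0 i).image (fun s => (s, firstCol T s))) A B r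
        → r ≤ i) ∧
      ∀ E' : FlowGraph, IsFlow E' A B →
        (∀ r : ℤ, IsTransitPoint E' A B r → r ≤ i) →
        E' ≠ (Finset.Icc i0 i).image (fun s => (s, firstCol T s)) →
        FlowLt ((Finset.Icc i0 i).image (fun s => (s, firstCol T s))) E' := by
  have hmono : StrictMonoOn (firstCol T) (Set.Icc 1 i) := by
    refine strictMonoOn_of_lt_succ Set.ordConnected_Icc fun s _ hs hs1 => ?_
    rw [Order.succ_eq_add_one] at hs1 ⊢
    refine firstCol_lt_firstCol_add_one hstd hs.1 (Multiset.card_pos.mp ?_)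
    rw [hT.1]
    exact (hheight _ hs1.1).mpr hs1.2
  have hgraph : StrictMonoOn (firstCol T) (Set.Icc i0 i) ∧ ∀ s ∈ Icc i0 i, s < firstCol T s := by
    rcases hi0 with ⟨hi0, -, hlt0, -⟩ | ⟨rfl, -⟩
    · have hf := hmono.mono (Set.Icc_subset_Icc_left hi0)
      exact ⟨hf, lt_apply_of_strictMonoOn hf hlt0⟩
    · rw [Set.Icc_eq_empty (by omega), Icc_eq_empty (by omega)]
      exact ⟨fun _ h => h.elim, fun _ h => absurd h (notMem_empty _)⟩
  obtain ⟨hf, hlt⟩ := hgraph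
  exact ⟨graphSources i0 i (firstCol T), graphSinks i0 i (firstCol T), isFlow_graphOn hlt hf.injOn,
    fun _ => le_of_mem_graphSources, fun _ => lt_of_mem_graphSinks hlt,
    fun _ => le_of_isTransitPoint_graphOn, fun _ hF' htr' => flowLt_graphOn hF' htr' hlt hf⟩

/-- From the proof of Lemma 37: let `T` be a standard `lam`-tableau whose first
column has height `i`, let `i₀` be minimal in `{1,…,i}` with `i₀ < T(i₀,1)`
(and `i₀ = i + 1`, playing the role of `+∞`, if there is none), and let `Γ` be
the graph with edges `(s, T(s,1))` for `s = i₀,…,i`. Then `Γ` is a flow, its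
sources and transit points are at most `i`, its sinks exceed `i`, and `Γ` is
the smallest element of `𝓕_i(a_1,…,a_q; b_1,…,b_q)`, where the `a`'s are its
sources and the `b`'s its sinks. -/
theorem statement18 (n i : ℤ) (lam : ℤ → ℕ) (T : ℤ → Multiset ℤ)
    (hi1 : 1 ≤ i) (hin : i ≤ n)
    (hcomp : IsComposition n lam)
    (hpart : ∀ j k : ℤ, 1 ≤ j → j ≤ k → lam k ≤ lam j)
    (hheight : ∀ j : ℤ, 1 ≤ j → (0 < lam j ↔ j ≤ i))
    (hT : IsTab n lam T) (hstd : IsStandardTab T)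
    (i0 : ℤ)
    (hi0 : (1 ≤ i0 ∧ i0 ≤ i ∧ i0 < firstCol T i0 ∧
              ∀ s : ℤ, 1 ≤ s → s < i0 → ¬ s < firstCol T s)
         ∨ (i0 = i + 1 ∧ ∀ s : ℤ, 1 ≤ s → s ≤ i → ¬ s < firstCol T s)) :
    ∃ A B : Finset ℤ,
      IsFlow ((Finset.Icc i0 i).image (fun s => (s, firstCol T s))) A B ∧
      (∀ x ∈ A, x ≤ i) ∧ (∀ y ∈ B, i < y) ∧
      (∀ r : ℤ, IsTransitPoint ((Finset.Icc i0 i).image (fun s => (s, firstCol T s))) A B r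
        → r ≤ i) ∧
      ∀ E' : FlowGraph, IsFlow E' A B →
        (∀ r : ℤ, IsTransitPoint E' A B r → r ≤ i) →
        E' ≠ (Finset.Icc i0 i).image (fun s => (s, firstCol T s)) →
        FlowLt ((Finset.Icc i0 i).image (fun s => (s, firstCol T s))) E' :=
  statement18_general n i lam T hheight hT hstd i0 hi0
end

section
/- Let λ be a composition of length n, let X be a nonempty set of regular row standard λ-tableaux with T a minimal element of X (with respect to the tableau order), let 1 ≤ a_1 < … < a_q ≤ i < b_q < … < b_1 ≤ n, let Γ be the smallest element of 𝓕_i(a_1,…,a_q; b_1,…,b_q), and suppose σ_{Γ,i}(T) is well-defined. Then for every Γ' ∈ 𝓕_i(a_1,…,a_q; b_1,…,b_q) and every S ∈ X such that σ_{Γ',i}(S) is well-defined and (Γ', S) ≠ (Γ, T), one has σ_{Γ',i}(S) ≰ σ_{Γ,i}(T) in the tableau order. In particular, in the formal sum Σ over such pairs (Γ', S) of the tableaux σ_{Γ',i}(S), the tableau σ_{Γ,i}(T) occurs exactly once (for the pair (Γ, T)) and is a minimal element of the set of all tableaux occurring. -/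
open Finset

/-- The `s`-th component of the vector `ν_m(Γ) = Σ { ε_s | (s,t) edge of Γ, s ≤ m < t }`. -/
def nuC (E : FlowGraph) (m s : ℤ) : ℤ :=
  ((E.filter (fun e => e.1 = s ∧ s ≤ m ∧ m < e.2)).card : ℤ)

/-- Dominance order: `x ≤ y` iff all initial partial sums (over `1,…,k`) of `x`
are at most those of `y`. -/
def DomLE (x y : ℤ → ℤ) : Prop :=
  ∀ k : ℤ, ∑ j ∈ Finset.Icc 1 k, x j ≤ ∑ j ∈ Finset.Icc 1 k, y j

/-- A (regular row standard) `lam`-tableau with entries in `{1,…,n}` is modelled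
by its rows, each row being the multiset of its entries (which determines the
row standard tableau uniquely): row `r` has `lam r` entries, and every entry of
row `r` lies in `{1,…,n}` and is at least `r`. -/
def IsRegularTab (n : ℤ) (lam : ℤ → ℕ) (T : ℤ → Multiset ℤ) : Prop :=
  (∀ r : ℤ, (T r).card = lam r) ∧
  (∀ r : ℤ, ∀ x ∈ T r, r ≤ x ∧ 1 ≤ x ∧ x ≤ n)

/-- The edges of `E` beginning at `r`. -/
def outEdges (E : FlowGraph) (r : ℤ) : Finset (ℤ × ℤ) := E.filter (fun e => e.1 = r)

/-- `σ_{Γ,i}(T)`: for every edge `(s,t)` of `Γ`, one entry `t` of row `s` is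
replaced by `s`; moreover one entry `k` is added to each row `k = i+1,…,n`. -/
def sigmaTab (E : FlowGraph) (i n : ℤ) (T : ℤ → Multiset ℤ) : ℤ → Multiset ℤ :=
  fun r =>
    (T r - (outEdges E r).val.map Prod.snd)
      + Multiset.replicate (outEdges E r).card r
      + (if i < r ∧ r ≤ n then {r} else 0)

/-- `σ_{Γ,i}(T)` is well-defined: for every edge `(s,t)` of `Γ`, row `s` of `T`
contains an entry `t`. -/
def SigmaDefined (E : FlowGraph) (T : ℤ → Multiset ℤ) : Prop :=
  ∀ e ∈ E, e.2 ∈ T e.1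

/-- The length of row `r` of the truncated tableau `T[m]` (all entries `> m`
removed), i.e. the `r`-th component of `shape (T[m])`. -/
def shapeR (T : ℤ → Multiset ℤ) (m r : ℤ) : ℕ :=
  ((T r).filter (fun x => x ≤ m)).card

/-- The `m`-th component of `chain(T)`, i.e. `shape (T[m])`, as a vector of
integers. -/
def shapeVec (T : ℤ → Multiset ℤ) (m : ℤ) : ℤ → ℤ := fun r => (shapeR T m r : ℤ)

/-- The tableau order: `T < S` iff `chain(T) = (shape T[1],…,shape T[n])` is
smaller than `chain(S)` in the antilexicographic order with the dominance order
on components. -/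
def TabLT (n : ℤ) (T S : ℤ → Multiset ℤ) : Prop :=
  ∃ m : ℤ, 1 ≤ m ∧ m ≤ n ∧
    DomLE (shapeVec T m) (shapeVec S m) ∧ shapeVec T m ≠ shapeVec S m ∧
    ∀ m' : ℤ, m < m' → m' ≤ n → shapeVec T m' = shapeVec S m'

/-- `T ≤ S` in the tableau order: `T < S` or `chain(T) = chain(S)`. -/
def TabLE (n : ℤ) (T S : ℤ → Multiset ℤ) : Prop :=
  TabLT n T S ∨ ∀ m : ℤ, 1 ≤ m → m ≤ n → shapeVec T m = shapeVec S m

/-! The shape of `σ_{Γ,i}(T)[m]` is `shape (T[m]) + ν_m(Γ)` plus the boxes added in rows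
`i+1, …, n`, so comparing `σ_{Γ',i}(S)` with `σ_{Γ,i}(T)` amounts to comparing the chains
`chain(S) + ν(Γ')` and `chain(T) + ν(Γ)` antilexicographically. If `Γ' ≠ Γ`, then at the highest
level `M` where `ν_M(Γ) ≠ ν_M(Γ')` the two flows agree on all edges ending above `M + 1` and have
distinct edges `(x, M+1)` and `(x', M+1)`; minimality of `Γ` gives `x' < x`, so `ν(Γ) < ν(Γ')`
with a strictly smaller partial sum at level `M`. Then `σ_{Γ',i}(S) ≤ σ_{Γ,i}(T)` would give
`chain(S) < chain(T)`, against minimality of `T`. If `Γ' = Γ`, minimality of `T` forces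
`chain(S) = chain(T)`, and a regular tableau is determined by its chain. -/

lemma domLE_add_right_iff {x y z : ℤ → ℤ} : DomLE (x + z) (y + z) ↔ DomLE x y := by
  simp only [DomLE, Pi.add_apply, sum_add_distrib, add_le_add_iff_right]

namespace Chain

/-- `TabLT n T S` is `LT n (shapeVec T) (shapeVec S)`; allowing arbitrary integer chains lets
the order be shifted by the vectors `ν_m(Γ)`. -/
def LT (n : ℤ) (c d : ℤ → ℤ → ℤ) : Prop :=
  ∃ m : ℤ, 1 ≤ m ∧ m ≤ n ∧ DomLE (c m) (d m) ∧ c m ≠ d m ∧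
    ∀ m' : ℤ, m < m' → m' ≤ n → c m' = d m'

def LE (n : ℤ) (c d : ℤ → ℤ → ℤ) : Prop :=
  LT n c d ∨ ∀ m : ℤ, 1 ≤ m → m ≤ n → c m = d m

/-- Dominance ignores rows `≤ 0`, so `c m ≠ d m` is not stable under composing with `LE`;
a strict inequality of partial sums is. -/
def StrongLT (n : ℤ) (c d : ℤ → ℤ → ℤ) : Prop :=
  ∃ m : ℤ, 1 ≤ m ∧ m ≤ n ∧ DomLE (c m) (d m) ∧
    (∃ k : ℤ, ∑ j ∈ Icc 1 k, c m j < ∑ j ∈ Icc 1 k, d m j) ∧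
    ∀ m' : ℤ, m < m' → m' ≤ n → c m' = d m'

variable {n : ℤ} {c d e : ℤ → ℤ → ℤ}

lemma lt_add_right_iff : LT n (c + e) (d + e) ↔ LT n c d := by
  simp only [LT, Pi.add_apply, domLE_add_right_iff, ne_eq, add_left_inj]

lemma le_add_right_iff : LE n (c + e) (d + e) ↔ LE n c d := by
  simp only [LE, lt_add_right_iff, Pi.add_apply, add_left_inj]

lemma StrongLT.add_left (h : StrongLT n c d) (e : ℤ → ℤ → ℤ) : StrongLT n (e + c) (e + d) := by
  obtain ⟨m, hm1, hmn, hdom, ⟨k, hk⟩, habove⟩ := h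
  refine ⟨m, hm1, hmn, fun k => ?_, ⟨k, ?_⟩, fun m' h1 h2 => by simp [habove m' h1 h2]⟩ <;>
    simp only [Pi.add_apply, sum_add_distrib]
  · linarith [hdom k]
  · linarith

lemma LE.trans_strongLT (hcd : LE n c d) (hde : StrongLT n d e) : LT n c e := by
  obtain ⟨M, hM1, hMn, hdom, ⟨k, hk⟩, habove⟩ := hde
  have hne : ∀ x : ℤ → ℤ, DomLE x (d M) → x ≠ e M := by
    rintro x hx rfl
    exact (hx k).not_gt hk
  rcases hcd with ⟨m₀, hm₁, hm₀n, hdom₀, hne₀, habove₀⟩ | heq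
  · rcases lt_trichotomy m₀ M with hlt | rfl | hgt
    · refine ⟨M, hM1, hMn, ?_, ?_, fun m' h1 h2 => ?_⟩
      · rwa [habove₀ M hlt hMn]
      · rw [habove₀ M hlt hMn]; exact hne _ fun _ => le_rfl
      · rw [habove₀ m' (hlt.trans h1) h2, habove m' h1 h2]
    · exact ⟨m₀, hm₁, hm₀n, fun k => (hdom₀ k).trans (hdom k), hne _ hdom₀,
        fun m' h1 h2 => (habove₀ m' h1 h2).trans (habove m' h1 h2)⟩
    · refine ⟨m₀, hm₁, hm₀n, ?_, ?_, fun m' h1 h2 => ?_⟩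
      · rwa [← habove m₀ hgt hm₀n]
      · rwa [← habove m₀ hgt hm₀n]
      · rw [habove₀ m' h1 h2, habove m' (hgt.trans h1) h2]
  · refine ⟨M, hM1, hMn, ?_, ?_, fun m' h1 h2 => ?_⟩
    · rwa [heq M hM1 hMn]
    · rw [heq M hM1 hMn]; exact hne _ fun _ => le_rfl
    · rw [heq m' (hM1.trans h1.le) h2, habove m' h1 h2]

end Chain

lemma domLE_of_eq_add_single_sub_single {x y : ℤ → ℤ} {p p' : ℤ} (hp' : 1 ≤ p') (hp : p' < p)
    (h : ∀ s, x s = y s + (if s = p then 1 else 0) - (if s = p' then 1 else 0)) :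
    DomLE x y ∧ ∑ j ∈ Icc 1 p', x j < ∑ j ∈ Icc 1 p', y j := by
  have hsum : ∀ k, ∑ j ∈ Icc 1 k, x j = ∑ j ∈ Icc 1 k, y j
      + (if p ∈ Icc 1 k then 1 else 0) - (if p' ∈ Icc 1 k then 1 else 0) := fun k => by
    simp only [h, sum_sub_distrib, sum_add_distrib, sum_ite_eq']
  refine ⟨fun k => ?_, ?_⟩ <;> simp only [hsum, mem_Icc] <;> split_ifs <;> omega

section Flow

variable {E E' : FlowGraph} {A B : Finset ℤ}

lemma IsFlow.card_beginsAt_le_one_s19 (hE : IsFlow E A B) (r : ℤ) : (beginsAt E r).card ≤ 1 := by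
  by_cases hA : r ∈ A
  · exact (hE.source_out r hA).le
  by_cases hB : r ∈ B
  · simp [hE.sink_out r hB]
  rcases hE.transit r hA hB with ⟨h, _⟩ | ⟨h, _⟩ <;> simp [h]

lemma IsFlow.card_endsAt_le_one_s19 (hE : IsFlow E A B) (r : ℤ) : (endsAt E r).card ≤ 1 := by
  by_cases hA : r ∈ A
  · simp [hE.source_in r hA]
  by_cases hB : r ∈ B
  · exact (hE.sink_in r hB).le
  rcases hE.transit r hA hB with ⟨_, h⟩ | ⟨_, h⟩ <;> simp [h]

lemma IsFlow.fst_eq_of_mem (hE : IsFlow E A B) {x y r : ℤ} (hx : (x, r) ∈ E) (hy : (y, r) ∈ E) :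
    x = y := by
  have := Finset.card_le_one.mp (hE.card_endsAt_le_one_s19 r) (x, r) (by simp [endsAt, hx])
    (y, r) (by simp [endsAt, hy])
  exact congrArg Prod.fst this

lemma IsFlow.endsAt_nonempty_iff (hE : IsFlow E A B) (r : ℤ) :
    (endsAt E r).Nonempty ↔ r ∈ B ∨ r ∉ A ∧ (beginsAt E r).Nonempty := by
  by_cases hA : r ∈ A
  · simp [hA, hE.source_in r hA, Finset.disjoint_left.mp hE.disjAB hA]
  by_cases hB : r ∈ B
  · simp [hB, ← Finset.card_pos, hE.sink_in r hB]
  rcases hE.transit r hA hB with ⟨h1, h2⟩ | ⟨h1, h2⟩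
  · simp [hA, hB, h1, h2]
  · simp [hA, hB, ← Finset.card_pos, h1, h2]

lemma IsFlow.endsAt_nonempty_iff_of_beginsAt_eq (hE : IsFlow E A B) (hE' : IsFlow E' A B)
    {r : ℤ} (h : beginsAt E r = beginsAt E' r) :
    (endsAt E r).Nonempty ↔ (endsAt E' r).Nonempty := by
  rw [hE.endsAt_nonempty_iff, hE'.endsAt_nonempty_iff, h]

end Flow

section DescList

variable {u v : List (ℤ × ℤ)} {e p : ℤ × ℤ}

lemma DescList.snd_lt_of_mem_left (h : DescList (u ++ e :: v)) (hp : p ∈ u) : e.2 < p.2 :=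
  (List.pairwise_append.mp h).2.2 p hp e List.mem_cons_self

lemma DescList.snd_lt_of_mem_right (h : DescList (u ++ e :: v)) (hp : p ∈ v) : p.2 < e.2 :=
  (List.pairwise_cons.mp (List.pairwise_append.mp h).2.1).1 p hp

lemma DescList.not_mem_left (h : DescList (u ++ e :: v)) : e ∉ u :=
  fun he => lt_irrefl _ (h.snd_lt_of_mem_left he)

end DescList

lemma FlowLt.fst_lt_of_agree_above {E E' : FlowGraph} (h : FlowLt E E') {N x x' : ℤ}
    (hagree : ∀ p : ℤ × ℤ, N < p.2 → (p ∈ E ↔ p ∈ E'))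
    (hx : (x, N) ∈ E) (hx' : (x', N) ∈ E') (hxE' : (x, N) ∉ E') (hx'E : (x', N) ∉ E) :
    x' < x := by
  obtain ⟨u, v, v', e, e', hd, hd', rfl, rfl, hlt⟩ := h
  simp only [List.mem_toFinset, List.mem_append, List.mem_cons] at hagree hx hx' hxE' hx'E
  have hne : e ≠ e' := by rintro rfl; exact lt_irrefl _ hlt
  have he : ¬ N < e.2 := by
    intro hN
    have hev' : e ∈ v' := by
      rcases (hagree e hN).mp (by simp) with h | h | h
      · exact absurd h hd.not_mem_left
      · exact absurd h hne
      · exact h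
    have hee' := hd'.snd_lt_of_mem_right hev'
    have he'v : e' ∈ v := by
      rcases (hagree e' (hN.trans hee')).mpr (by simp) with h | h | h
      · exact absurd h hd'.not_mem_left
      · exact absurd h.symm hne
      · exact h
    exact lt_asymm hee' (hd.snd_lt_of_mem_right he'v)
  have he' : ¬ N < e'.2 := by
    intro hN
    rcases (hagree e' hN).mpr (by simp) with h | h | h
    · exact hd'.not_mem_left h
    · exact hne h.symm
    · exact he (hN.trans (hd.snd_lt_of_mem_right h))
  have hxe : (x, N) = e := by
    rcases hx with h | h | h
    · exact absurd (Or.inl h) hxE'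
    · exact h
    · exact absurd (hd.snd_lt_of_mem_right h) he
  have hxe' : (x', N) = e' := by
    rcases hx' with h | h | h
    · exact absurd (Or.inl h) hx'E
    · exact h
    · exact absurd (hd'.snd_lt_of_mem_right h) he'
  subst hxe hxe'
  exact hlt

section Nu

variable {E E' : FlowGraph}

lemma nuC_eq_nuC_succ_add (hlt : ∀ e ∈ E, e.1 < e.2) {m s : ℤ} (hs : s ≠ m + 1) :
    nuC E m s = nuC E (m + 1) s + if (s, m + 1) ∈ E then 1 else 0 := by
  have hpair : (if (s, m + 1) ∈ E then (1 : ℤ) else 0)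
      = ∑ e ∈ E, if e.1 = s ∧ e.2 = m + 1 then 1 else 0 := by
    simp_rw [← Prod.ext_iff (y := (s, m + 1))]
    rw [sum_ite_eq']
  rw [hpair, nuC, nuC, card_filter, card_filter]
  push_cast
  rw [← sum_add_distrib]
  refine sum_congr rfl fun e he => ?_
  have := hlt e he
  split_ifs <;> omega

lemma nuC_of_lt {m s : ℤ} (h : m < s) : nuC E m s = 0 := by
  simp only [nuC, Nat.cast_eq_zero, card_eq_zero, filter_eq_empty_iff]
  omega

lemma mem_iff_of_nuC_eq_above (hlt : ∀ e ∈ E, e.1 < e.2) (hlt' : ∀ e ∈ E', e.1 < e.2) {M : ℤ}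
    (h : ∀ m, M < m → nuC E m = nuC E' m) {p : ℤ × ℤ} (hp : M + 1 < p.2) :
    p ∈ E ↔ p ∈ E' := by
  obtain ⟨s, t⟩ := p
  by_cases hst : s = t
  · subst hst
    exact iff_of_false (fun hm => lt_irrefl _ (hlt _ hm)) (fun hm => lt_irrefl _ (hlt' _ hm))
  have key := congrFun (h (t - 1) (by simp at hp; omega)) s
  rw [nuC_eq_nuC_succ_add hlt (by omega), nuC_eq_nuC_succ_add hlt' (by omega), sub_add_cancel,
    h t (by simp at hp; omega)] at key
  split_ifs at key with h1 h2 h2 <;> simp_all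

lemma eq_of_nuC_eq (hlt : ∀ e ∈ E, e.1 < e.2) (hlt' : ∀ e ∈ E', e.1 < e.2)
    (h : nuC E = nuC E') : E = E' := by
  ext p
  exact mem_iff_of_nuC_eq_above hlt hlt' (M := p.2 - 2) (fun m _ => congrFun h m) (by omega)

lemma nuC_sub_nuC_eq (hlt : ∀ e ∈ E, e.1 < e.2) (hlt' : ∀ e ∈ E', e.1 < e.2) {M : ℤ}
    (h : nuC E (M + 1) = nuC E' (M + 1)) (s : ℤ) :
    nuC E M s - nuC E' M s
      = (if (s, M + 1) ∈ E then 1 else 0) - (if (s, M + 1) ∈ E' then 1 else 0) := by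
  by_cases hs : s = M + 1
  · subst hs
    rw [nuC_of_lt (lt_add_one M), nuC_of_lt (lt_add_one M),
      if_neg fun hm => lt_irrefl _ (hlt _ hm), if_neg fun hm => lt_irrefl _ (hlt' _ hm)]
  rw [nuC_eq_nuC_succ_add hlt hs, nuC_eq_nuC_succ_add hlt' hs, h]
  ring

lemma nuC_eq_zero_of_le {n m : ℤ} (hE : ∀ e ∈ E, e.2 ≤ n) (hm : n ≤ m) : nuC E m = 0 := by
  funext s
  simp only [nuC, Pi.zero_apply, Nat.cast_eq_zero, card_eq_zero, filter_eq_empty_iff]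
  intro e he
  have := hE e he
  omega

end Nu

lemma beginsAt_eq_of_nuC_eq_above {E E' : FlowGraph} (hlt : ∀ e ∈ E, e.1 < e.2)
    (hlt' : ∀ e ∈ E', e.1 < e.2) {M : ℤ} (habove : ∀ m, M < m → nuC E m = nuC E' m) :
    beginsAt E (M + 1) = beginsAt E' (M + 1) := by
  ext p
  simp only [beginsAt, mem_filter, and_congr_left_iff]
  intro hp
  constructor <;> intro hmem
  · exact (mem_iff_of_nuC_eq_above hlt hlt' habove (by have := hlt p hmem; omega)).mp hmem
  · exact (mem_iff_of_nuC_eq_above hlt hlt' habove (by have := hlt' p hmem; omega)).mpr hmem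

lemma FlowLt.exists_nuC_eq_add_single_sub_single {A B : Finset ℤ} {E E' : FlowGraph}
    (hflow : FlowLt E E') (hE : IsFlow E A B) (hE' : IsFlow E' A B) {M : ℤ}
    (habove : ∀ m, M < m → nuC E m = nuC E' m) (hM : nuC E M ≠ nuC E' M) :
    ∃ x x', (x', M + 1) ∈ E' ∧ x' < x ∧
      ∀ s, nuC E M s = nuC E' M s + (if s = x then 1 else 0) - (if s = x' then 1 else 0) := by
  have hdiff := nuC_sub_nuC_eq hE.edge_lt hE'.edge_lt (habove (M + 1) (lt_add_one M))
  have hin_iff := hE.endsAt_nonempty_iff_of_beginsAt_eq hE'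
    (beginsAt_eq_of_nuC_eq_above hE.edge_lt hE'.edge_lt habove)
  obtain ⟨s₀, hs₀⟩ : ∃ s, nuC E M s ≠ nuC E' M s := Function.ne_iff.mp hM
  have hin : (endsAt E (M + 1)).Nonempty := by
    obtain h | h : (s₀, M + 1) ∈ E ∨ (s₀, M + 1) ∈ E' := by
      by_contra! h
      exact hs₀ (by simpa [h.1, h.2, sub_eq_zero] using hdiff s₀)
    · exact ⟨(s₀, M + 1), by simp [endsAt, h]⟩
    · exact hin_iff.mpr ⟨(s₀, M + 1), by simp [endsAt, h]⟩
  obtain ⟨⟨x, _⟩, hx⟩ := hin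
  obtain ⟨⟨x', _⟩, hx'⟩ := hin_iff.mp ⟨_, hx⟩
  simp only [endsAt, mem_filter] at hx hx'
  obtain ⟨hx, rfl⟩ := hx
  obtain ⟨hx', rfl⟩ := hx'
  have hmemE : ∀ s, (s, M + 1) ∈ E ↔ s = x := fun s =>
    ⟨fun hs => hE.fst_eq_of_mem hs hx, fun hs => hs ▸ hx⟩
  have hmemE' : ∀ s, (s, M + 1) ∈ E' ↔ s = x' := fun s =>
    ⟨fun hs => hE'.fst_eq_of_mem hs hx', fun hs => hs ▸ hx'⟩
  simp only [hmemE, hmemE'] at hdiff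
  have hxx' : x ≠ x' := by
    rintro rfl
    exact hs₀ (by simpa [sub_eq_zero] using hdiff s₀)
  refine ⟨x, x', hx', ?_, fun s => by linarith [hdiff s]⟩
  exact hflow.fst_lt_of_agree_above
    (fun p hp => mem_iff_of_nuC_eq_above hE.edge_lt hE'.edge_lt habove hp) hx hx'
    (fun h => hxx' ((hmemE' x).mp h)) (fun h => hxx'.symm ((hmemE x').mp h))

theorem strongLT_nuC_of_flowLt {n : ℤ} {A B : Finset ℤ} {E E' : FlowGraph}
    (hE : IsFlow E A B) (hE' : IsFlow E' A B)
    (hbd : ∀ e ∈ E, 1 ≤ e.1 ∧ e.2 ≤ n) (hbd' : ∀ e ∈ E', 1 ≤ e.1 ∧ e.2 ≤ n)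
    (hne : E ≠ E') (hflow : FlowLt E E') : Chain.StrongLT n (nuC E) (nuC E') := by
  have hbdd : ∀ m, nuC E m ≠ nuC E' m → m ≤ n := fun m hm => by
    by_contra! hnm
    exact hm (by rw [nuC_eq_zero_of_le (fun e he => (hbd e he).2) hnm.le,
      nuC_eq_zero_of_le (fun e he => (hbd' e he).2) hnm.le])
  have hex : ∃ m, nuC E m ≠ nuC E' m := by
    by_contra! h
    exact hne (eq_of_nuC_eq hE.edge_lt hE'.edge_lt (funext h))
  obtain ⟨M, hM, hMmax⟩ := Int.exists_greatest_of_bdd ⟨n, hbdd⟩ hex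
  have habove : ∀ m, M < m → nuC E m = nuC E' m := fun m hm => by
    by_contra h
    exact (hMmax m h).not_gt hm
  obtain ⟨x, x', hx', hx'x, hdiff⟩ :=
    hflow.exists_nuC_eq_add_single_sub_single hE hE' habove hM
  have hx'M : x' ≤ M := by have := hE'.edge_lt _ hx'; simp only at this; omega
  have hx'1 : 1 ≤ x' := (hbd' _ hx').1
  obtain ⟨hdom, hstrict⟩ := domLE_of_eq_add_single_sub_single hx'1 hx'x hdiff
  exact ⟨M, hx'1.trans hx'M, hbdd M hM, hdom, ⟨x', hstrict⟩, fun m hm _ => habove m hm⟩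

/-- The contribution of the entries `k` added to the rows `k = i+1, …, n` to `shape (σ[m])`. -/
def extraShape (i n : ℤ) : ℤ → ℤ → ℤ := fun m r => if i < r ∧ r ≤ n ∧ r ≤ m then 1 else 0

lemma nuC_eq_card_filter_outEdges (E : FlowGraph) (m r : ℤ) :
    nuC E m r = ((outEdges E r).filter (fun e => r ≤ m ∧ m < e.2)).card := by
  simp only [nuC, outEdges, filter_filter]

lemma IsFlow.outEdges_eq_empty_or_singleton {E : FlowGraph} {A B : Finset ℤ} (hE : IsFlow E A B)
    (r : ℤ) : outEdges E r = ∅ ∨ ∃ t, r < t ∧ outEdges E r = {(r, t)} := by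
  rcases (outEdges E r).eq_empty_or_nonempty with h | ⟨⟨s, t⟩, he⟩
  · exact Or.inl h
  obtain ⟨heE, rfl⟩ : (s, t) ∈ E ∧ s = r := by simpa [outEdges] using he
  refine Or.inr ⟨t, hE.edge_lt _ heE, eq_singleton_iff_unique_mem.mpr ⟨he, fun f hf => ?_⟩⟩
  exact card_le_one.mp (hE.card_beginsAt_le_one_s19 s) f hf _ he

theorem shapeVec_sigmaTab {E : FlowGraph} {A B : Finset ℤ} (hE : IsFlow E A B)
    {T : ℤ → Multiset ℤ} (hdef : SigmaDefined E T) (i n : ℤ) :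
    shapeVec (sigmaTab E i n T) = shapeVec T + nuC E + extraShape i n := by
  funext m r
  have hextra : ((Multiset.filter (· ≤ m) (if i < r ∧ r ≤ n then {r} else 0)).card : ℤ)
      = extraShape i n m r := by
    by_cases h : i < r ∧ r ≤ n <;> by_cases hm : r ≤ m <;>
      simp [extraShape, h, hm, Multiset.filter_singleton]
  simp only [shapeVec, shapeR, sigmaTab, Pi.add_apply, Multiset.filter_add, Multiset.card_add,
    Nat.cast_add, hextra, nuC_eq_card_filter_outEdges, add_left_inj]
  rcases hE.outEdges_eq_empty_or_singleton r with h | ⟨t, hrt, h⟩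
  · simp [h]
  · have hmem : (r, t) ∈ outEdges E r := h ▸ mem_singleton_self _
    have ht : t ∈ T r := hdef _ (mem_filter.mp hmem).1
    obtain ⟨R, hR⟩ := Multiset.exists_cons_of_mem ht
    simp only [h, hR, card_singleton, Multiset.replicate_one]
    have hmap : Multiset.map (fun x => x.2) ({(r, t)} : Finset (ℤ × ℤ)).val = {t} := rfl
    rw [hmap, Multiset.sub_singleton, Multiset.erase_cons_head, Multiset.filter_cons,
      Multiset.filter_singleton, filter_singleton]
    by_cases hm : r ≤ m <;> by_cases ht : m < t <;> simp [hm, ht, not_lt.mp]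
    omega

section Regular

variable {n : ℤ} {lam : ℤ → ℕ} {S T : ℤ → Multiset ℤ}

lemma multiset_eq_of_card_filter_le_eq {U V : Multiset ℤ}
    (h : ∀ m : ℤ, (U.filter (· ≤ m)).card = (V.filter (· ≤ m)).card) : U = V := by
  have hcount : ∀ (W : Multiset ℤ) (a : ℤ),
      (W.filter (· ≤ a)).card = (W.filter (· ≤ a - 1)).card + W.count a := fun W a => by
    rw [Multiset.count_eq_card_filter_eq, ← Multiset.card_add, Multiset.filter_add_filter,
      (Multiset.filter_eq_nil (p := fun x => x ≤ a - 1 ∧ a = x)).mpr fun x _ => by omega,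
      add_zero]
    exact congrArg _ (Multiset.filter_congr fun x _ => ⟨by omega, by omega⟩)
  ext a
  have := h a
  have := h (a - 1)
  have := hcount U a
  have := hcount V a
  omega

lemma IsRegularTab.shapeVec_of_nonpos (hS : IsRegularTab n lam S) {m : ℤ} (hm : m ≤ 0) :
    shapeVec S m = 0 := by
  funext r
  simp only [shapeVec, shapeR, Pi.zero_apply, Nat.cast_eq_zero, Multiset.card_eq_zero,
    Multiset.filter_eq_nil]
  intro x hx
  have := hS.2 r x hx
  omega

lemma IsRegularTab.shapeVec_of_le (hS : IsRegularTab n lam S) {m : ℤ} (hm : n ≤ m) :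
    shapeVec S m = fun r => (lam r : ℤ) := by
  funext r
  simp only [shapeVec, shapeR, ← hS.1 r, Nat.cast_inj]
  rw [Multiset.filter_eq_self.mpr fun x hx => (hS.2 r x hx).2.2.trans hm]

lemma IsRegularTab.eq_of_shapeVec_eq (hS : IsRegularTab n lam S) (hT : IsRegularTab n lam T)
    (h : ∀ m, 1 ≤ m → m ≤ n → shapeVec S m = shapeVec T m) : S = T := by
  funext r
  refine multiset_eq_of_card_filter_le_eq fun m => ?_
  have : shapeVec S m = shapeVec T m := by
    rcases le_or_gt m 0 with hm | hm
    · rw [hS.shapeVec_of_nonpos hm, hT.shapeVec_of_nonpos hm]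
    rcases le_or_gt n m with hn | hn
    · rw [hS.shapeVec_of_le hn, hT.shapeVec_of_le hn]
    · exact h m hm hn.le
  simpa [shapeVec, shapeR] using congrFun this r

lemma SigmaDefined.edge_bounds {E : FlowGraph} (hlam : IsComposition n lam)
    (hT : IsRegularTab n lam T) (hdef : SigmaDefined E T) : ∀ e ∈ E, 1 ≤ e.1 ∧ e.2 ≤ n := by
  intro e he
  have ht := hdef e he
  refine ⟨?_, (hT.2 _ _ ht).2.2⟩
  by_contra! h
  have hrow : (T e.1).card = 0 := by rw [hT.1, hlam e.1 (Or.inl h)]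
  simp [Multiset.card_eq_zero.mp hrow] at ht

end Regular

theorem eq_and_eq_of_tabLE_sigmaTab {n i : ℤ} {lam : ℤ → ℕ} {A B : Finset ℤ}
    {E E' : FlowGraph} {S T : ℤ → Multiset ℤ} (hlam : IsComposition n lam)
    (hS : IsRegularTab n lam S) (hT : IsRegularTab n lam T) (hST : ¬ TabLT n S T)
    (hE : IsFlow E A B) (hE' : IsFlow E' A B) (hEE' : E' ≠ E → FlowLt E E')
    (hdef : SigmaDefined E T) (hdef' : SigmaDefined E' S)
    (hle : TabLE n (sigmaTab E' i n S) (sigmaTab E i n T)) : E' = E ∧ S = T := by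
  have hle' : Chain.LE n (shapeVec S + nuC E') (shapeVec T + nuC E) := by
    rw [← Chain.le_add_right_iff (e := extraShape i n), ← shapeVec_sigmaTab hE' hdef',
      ← shapeVec_sigmaTab hE hdef]
    exact hle
  by_cases hEq : E' = E
  · subst hEq
    refine ⟨rfl, hS.eq_of_shapeVec_eq hT ?_⟩
    exact (Chain.le_add_right_iff.mp hle').resolve_left hST
  · have hslt := (strongLT_nuC_of_flowLt hE hE' (hdef.edge_bounds hlam hT)
      (hdef'.edge_bounds hlam hS) (Ne.symm hEq) (hEE' hEq)).add_left (shapeVec T)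
    exact absurd (Chain.lt_add_right_iff.mp (hle'.trans_strongLT hslt)) hST

theorem statement19_general {q : ℕ} (n i : ℤ) (a b : Fin q → ℤ)
    (lam : ℤ → ℕ) (hlam : IsComposition n lam)
    (X : Set (ℤ → Multiset ℤ))
    (hXreg : ∀ S ∈ X, IsRegularTab n lam S)
    (T : ℤ → Multiset ℤ) (hTX : T ∈ X)
    (hTmin : ∀ S ∈ X, ¬ TabLT n S T)
    (E : FlowGraph) (hE : InF i a b E)
    (hEmin : ∀ E' : FlowGraph, InF i a b E' → E' ≠ E → FlowLt E E')
    (hdef : SigmaDefined E T) :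
    (∀ (E' : FlowGraph) (S : ℤ → Multiset ℤ),
        InF i a b E' → S ∈ X → SigmaDefined E' S → (E', S) ≠ (E, T) →
        ¬ TabLE n (sigmaTab E' i n S) (sigmaTab E i n T)) ∧
    (∀ (E' : FlowGraph) (S : ℤ → Multiset ℤ),
        InF i a b E' → S ∈ X → SigmaDefined E' S →
        sigmaTab E' i n S = sigmaTab E i n T → E' = E ∧ S = T) ∧
    (∀ (E' : FlowGraph) (S : ℤ → Multiset ℤ),
        InF i a b E' → S ∈ X → SigmaDefined E' S →
        ¬ TabLT n (sigmaTab E' i n S) (sigmaTab E i n T)) := by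
  have key : ∀ (E' : FlowGraph) (S : ℤ → Multiset ℤ), InF i a b E' → S ∈ X →
      SigmaDefined E' S → TabLE n (sigmaTab E' i n S) (sigmaTab E i n T) → E' = E ∧ S = T :=
    fun E' S hE' hS hdef' =>
      eq_and_eq_of_tabLE_sigmaTab hlam (hXreg S hS) (hXreg T hTX) (hTmin S hS) hE.1 hE'.1
        (hEmin E' hE') hdef hdef'
  refine ⟨fun E' S hE' hS hdef' hne hle => ?_, fun E' S hE' hS hdef' heq => ?_,
    fun E' S hE' hS hdef' hlt => ?_⟩
  · obtain ⟨rfl, rfl⟩ := key E' S hE' hS hdef' hle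
    exact hne rfl
  · exact key E' S hE' hS hdef' (Or.inr fun m _ _ => by rw [heq])
  · obtain ⟨rfl, rfl⟩ := key E' S hE' hS hdef' (Or.inl hlt)
    obtain ⟨_, _, _, _, hne, _⟩ := hlt
    exact hne rfl

/-- Corollary 36 (key part): let `X` be a nonempty set of regular row standard
`lam`-tableaux with `T` a minimal element, and let `Γ` be the smallest element
of `𝓕_i(a_1,…,a_q; b_1,…,b_q)`, with `σ_{Γ,i}(T)` well-defined. Then for every
`Γ' ∈ 𝓕_i(a_1,…,a_q; b_1,…,b_q)` and `S ∈ X` with `σ_{Γ',i}(S)` well-defined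
and `(Γ', S) ≠ (Γ, T)`, we have `σ_{Γ',i}(S) ≰ σ_{Γ,i}(T)`. In particular
`σ_{Γ,i}(T)` occurs exactly once among the `σ_{Γ',i}(S)` and is a minimal
element of the set of tableaux occurring. -/
theorem statement19 {q : ℕ} (n i : ℤ) (a b : Fin q → ℤ)
    (ha : StrictMono a) (hb : StrictAnti b)
    (hai : ∀ j, a j ≤ i) (hbi : ∀ j, i < b j)
    (h1 : ∀ j, 1 ≤ a j) (h2 : ∀ j, b j ≤ n)
    (lam : ℤ → ℕ) (hlam : IsComposition n lam)
    (X : Set (ℤ → Multiset ℤ)) (hXne : X.Nonempty)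
    (hXreg : ∀ S ∈ X, IsRegularTab n lam S)
    (T : ℤ → Multiset ℤ) (hTX : T ∈ X)
    (hTmin : ∀ S ∈ X, ¬ TabLT n S T)
    (E : FlowGraph) (hE : InF i a b E)
    (hEmin : ∀ E' : FlowGraph, InF i a b E' → E' ≠ E → FlowLt E E')
    (hdef : SigmaDefined E T) :
    (∀ (E' : FlowGraph) (S : ℤ → Multiset ℤ),
        InF i a b E' → S ∈ X → SigmaDefined E' S → (E', S) ≠ (E, T) →
        ¬ TabLE n (sigmaTab E' i n S) (sigmaTab E i n T)) ∧
    (∀ (E' : FlowGraph) (S : ℤ → Multiset ℤ),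
        InF i a b E' → S ∈ X → SigmaDefined E' S →
        sigmaTab E' i n S = sigmaTab E i n T → E' = E ∧ S = T) ∧
    (∀ (E' : FlowGraph) (S : ℤ → Multiset ℤ),
        InF i a b E' → S ∈ X → SigmaDefined E' S →
        ¬ TabLT n (sigmaTab E' i n S) (sigmaTab E i n T)) :=
  statement19_general n i a b lam hlam X hXreg T hTX hTmin E hE hEmin hdef
end
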